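/- Let f ∈ ℚ[x] with f(0) ≠ 0 have no multiple roots, and order its roots as α_1,…,α_s,γ_1,…,γ_t (n = s+t) where α_1,…,α_s are exactly the roots of f that are not roots of rational. If the Galois-like group G_f is doubly transitive as a permutation group on the roots, then every v ∈ R_f (computed with respect to this ordering) satisfies v(1) = ⋯ = v(s) = (v(1)+⋯+v(n))/n. -/

import Mathlib

noncomputable section

open Polynomial

/-- `z` is a root of rational: some positive power of `z` is rational. -/
def IsRootOfRational (z : ℂ) : Prop := ∃ k : ℕ, 0 < k ∧ ∃ q : ℚ, z ^ k = (q : ℂ)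

/-- `z` is a rational number (viewed in `ℂ`). -/
def IsRat (z : ℂ) : Prop := ∃ q : ℚ, z = (q : ℂ)

/-- The Galois-like group `G_f`: permutations of the (indexed) roots preserving all
multiplicative relations. -/
def GaloisLike {ι : Type*} [Fintype ι] (r : ι → ℂ) : Set (Equiv.Perm ι) :=
  {σ | ∀ v : ι → ℤ, (∏ i, r i ^ v i) = 1 → (∏ i, r (σ i) ^ v i) = 1}

/-- The Galois-like group `G_f^B`. -/
def GaloisLikeB {ι : Type*} [Fintype ι] (r : ι → ℂ) : Set (Equiv.Perm ι) :=
  {σ | ∀ v : ι → ℤ, IsRat (∏ i, r i ^ v i) → (∏ i, r (σ i) ^ v i) = ∏ i, r i ^ v i}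

/-- The Galois-like group `G_f^ℚ`. -/
def GaloisLikeQ {ι : Type*} [Fintype ι] (r : ι → ℂ) : Set (Equiv.Perm ι) :=
  {σ | ∀ v : ι → ℤ, IsRat (∏ i, r i ^ v i) → IsRat (∏ i, r (σ i) ^ v i)}

/-- The exponent lattice of the vector `w` is trivial. -/
def VecLatticeTrivial {ι : Type*} [Fintype ι] (w : ι → ℂ) : Prop :=
  ∀ u : ι → ℤ, (∏ i, w i ^ u i) = 1 → ∀ i j : ι, u i = u j

/-- The lattice `R_w^ℚ` of the vector `w` is trivial. -/
def VecLatticeQTrivial {ι : Type*} [Fintype ι] (w : ι → ℂ) : Prop :=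
  ∀ u : ι → ℤ, IsRat (∏ i, w i ^ u i) → ∀ i j : ι, u i = u j

/-- A subset `M ⊆ ℚ[G/H]` is ℚ-admissible: there is `μ ∈ ℚ[G]` with stabilizer
(under left multiplication) exactly `H` such that `mμ = 0` for all `m ∈ M`
(here `Σ_{g∈G} m(ḡ) • gμ = |H| ⋅ (mμ)`, so we express `mμ = 0` this way). -/
def IsQAdmissible {G : Type*} [Group G] (H : Subgroup G) (M : Set ((G ⧸ H) →₀ ℚ)) : Prop :=
  ∃ μ : MonoidAlgebra ℚ G,
    (∀ g : G, MonoidAlgebra.single g (1 : ℚ) * μ = μ ↔ g ∈ H) ∧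
    ∀ m ∈ M, (∑ᶠ g : G, m (QuotientGroup.mk g) • (MonoidAlgebra.single g (1 : ℚ) * μ)) = 0

/-- A ℚ-subspace of `ℚ[G/H]` is a `ℚ[G]`-submodule iff it is stable under the
permutation action of `G` on `G/H`. -/
def IsGStable {G : Type*} [Group G] (H : Subgroup G) (M : Submodule ℚ ((G ⧸ H) →₀ ℚ)) : Prop :=
  ∀ g : G, ∀ m ∈ M, Finsupp.mapDomain (fun x : G ⧸ H => g • x) m ∈ M

/-- The pair `(G,H)` is ℚ-trivial: the only ℚ-admissible `ℚ[G]`-submodules of `ℚ[G/H]`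
are `0` and `V₁` (the line of constant coefficient vectors). -/
def QTrivialPair {G : Type*} [Group G] (H : Subgroup G) : Prop :=
  ∀ M : Submodule ℚ ((G ⧸ H) →₀ ℚ), IsGStable H M →
    IsQAdmissible H (M : Set ((G ⧸ H) →₀ ℚ)) →
    M = ⊥ ∨ (M : Set ((G ⧸ H) →₀ ℚ)) = {m | ∃ a : ℚ, ∀ x, m x = a}

/-- The action of `G` on `G/H` is transitive. -/
def PairTransitive {G : Type*} [Group G] (H : Subgroup G) : Prop :=
  ∀ x y : G ⧸ H, ∃ g : G, g • x = y

/-- The action of `G` on `G/H` is doubly transitive. -/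
def PairDoublyTransitive {G : Type*} [Group G] (H : Subgroup G) : Prop :=
  ∀ x₁ x₂ y₁ y₂ : G ⧸ H, x₁ ≠ x₂ → y₁ ≠ y₂ → ∃ g : G, g • x₁ = y₁ ∧ g • x₂ = y₂

/-- The action of `G` on `G/H` is doubly homogeneous. -/
def PairDoublyHomogeneous {G : Type*} [Group G] (H : Subgroup G) : Prop :=
  ∀ x₁ x₂ y₁ y₂ : G ⧸ H, x₁ ≠ x₂ → y₁ ≠ y₂ →
    ∃ g : G, ({g • x₁, g • x₂} : Set (G ⧸ H)) = {y₁, y₂}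

/-- A set of permutations of `ι` acts transitively. -/
def SetTransitive {ι : Type*} (S : Set (Equiv.Perm ι)) : Prop :=
  ∀ i j : ι, ∃ σ ∈ S, σ i = j

/-- A set of permutations of `ι` acts doubly transitively. -/
def SetDoublyTransitive {ι : Type*} (S : Set (Equiv.Perm ι)) : Prop :=
  ∀ i j k l : ι, i ≠ j → k ≠ l → ∃ σ ∈ S, σ i = k ∧ σ j = l

/-- A set of permutations of `ι` acts doubly homogeneously. -/
def SetDoublyHomogeneous {ι : Type*} (S : Set (Equiv.Perm ι)) : Prop :=
  ∀ i j k l : ι, i ≠ j → k ≠ l → ∃ σ ∈ S, ({σ i, σ j} : Set ι) = {k, l}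


/-! The exponent lattice of `r` is invariant under `G_f`, so averaging `v` over the stabilizer
of a root `r i` in `G_f` gives a relation `u` that, by double transitivity, is constant
off `i`. Such a relation reads `r i ^ (u i - C) = (∏ r) ^ (-C)`, and `∏ r` is rational by
Vieta, so if `r i` is not a root of rational then `u` is constant. Comparing `u i` with the
sum of `u` then gives `n * v i = ∑ v`. -/

open Equiv

section ExponentRelations

variable {ι : Type*} [Fintype ι] {K : Type*} [CommGroupWithZero K] {r : ι → K}

lemma prod_zpow_add₀ (hr : ∀ i, r i ≠ 0) (u v : ι → ℤ) :
    ∏ i, r i ^ (u i + v i) = (∏ i, r i ^ u i) * ∏ i, r i ^ v i := by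
  rw [← Finset.prod_mul_distrib]
  exact Finset.prod_congr rfl fun i _ => zpow_add₀ (hr i) _ _

lemma prod_zpow_sum_eq_one {α : Type*} (hr : ∀ i, r i ≠ 0) (s : Finset α) {u : α → ι → ℤ}
    (hu : ∀ a ∈ s, ∏ i, r i ^ u a i = 1) : ∏ i, r i ^ ∑ a ∈ s, u a i = 1 := by
  classical
  induction s using Finset.induction_on with
  | empty => simp
  | insert a s ha ih =>
    simp only [Finset.sum_insert ha, prod_zpow_add₀ hr]
    rw [hu a (Finset.mem_insert_self a s),
      ih fun b hb => hu b (Finset.mem_insert_of_mem hb), one_mul]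

lemma prod_zpow_eq_of_forall_ne [DecidableEq ι] (hr : ∀ i, r i ≠ 0) {u : ι → ℤ} {i : ι}
    {C : ℤ} (hu : ∀ k, k ≠ i → u k = C) :
    ∏ k, r k ^ u k = (∏ k, r k) ^ C * r i ^ (u i - C) := by
  have hsplit : u = fun k => C + (Pi.single i (u i - C) : ι → ℤ) k := by
    funext k
    by_cases hk : k = i
    · subst hk
      simp
    · simp [hk, hu k hk]
  conv_lhs => rw [hsplit]
  rw [prod_zpow_add₀ hr, Finset.prod_zpow]
  congr 1
  rw [Fintype.prod_eq_single i fun k hk => by rw [Pi.single_eq_of_ne hk, zpow_zero],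
    Pi.single_eq_same]

end ExponentRelations

lemma isRootOfRational_of_isRat_zpow {z : ℂ} {m : ℤ} (hm : m ≠ 0) (h : IsRat (z ^ m)) :
    IsRootOfRational z := by
  obtain ⟨q, hq⟩ := h
  refine ⟨m.natAbs, Int.natAbs_pos.2 hm, ?_⟩
  rcases le_or_gt 0 m with hm₀ | hm₀
  · refine ⟨q, ?_⟩
    rw [← zpow_natCast, Int.natAbs_of_nonneg hm₀, hq]
  · refine ⟨q⁻¹, ?_⟩
    rw [← zpow_natCast, Int.ofNat_natAbs_of_nonpos hm₀.le, zpow_neg, hq, Rat.cast_inv]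

theorem eq_of_prod_zpow_eq_one_of_forall_ne {ι : Type*} [Fintype ι] [DecidableEq ι]
    {r : ι → ℂ} (hr : ∀ i, r i ≠ 0) (hprod : IsRat (∏ k, r k)) {i : ι}
    (hi : ¬ IsRootOfRational (r i)) {u : ι → ℤ} {C : ℤ} (hu : ∀ k, k ≠ i → u k = C)
    (h : ∏ k, r k ^ u k = 1) : u i = C := by
  by_contra hne
  refine hi (isRootOfRational_of_isRat_zpow (sub_ne_zero.2 hne) ?_)
  obtain ⟨q, hq⟩ := hprod
  refine ⟨q ^ (-C), ?_⟩
  rw [prod_zpow_eq_of_forall_ne hr hu] at h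
  rw [eq_inv_of_mul_eq_one_right h, Rat.cast_zpow, ← hq, zpow_neg]

section GaloisLike

variable {ι : Type*} [Fintype ι] {r : ι → ℂ}

lemma prod_apply_perm_zpow (σ : Perm ι) (v : ι → ℤ) :
    ∏ i, r (σ i) ^ v i = ∏ i, r i ^ v (σ⁻¹ i) := by
  rw [← Equiv.prod_comp σ (fun i => r i ^ v (σ⁻¹ i))]
  simp

lemma mem_galoisLike_iff {σ : Perm ι} :
    σ ∈ GaloisLike r ↔ ∀ v : ι → ℤ, ∏ i, r i ^ v i = 1 → ∏ i, r i ^ v (σ⁻¹ i) = 1 := by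
  simp only [GaloisLike, Set.mem_ofPred_eq, prod_apply_perm_zpow]

/-- Closure under inverses comes for free because `Perm ι` is finite. -/
def galoisLikeSubgroup (r : ι → ℂ) : Subgroup (Perm ι) :=
  let M : Submonoid (Perm ι) :=
    { carrier := GaloisLike r
      one_mem' := fun v hv => by simpa using hv
      mul_mem' := fun {σ τ} hσ hτ => by
        rw [mem_galoisLike_iff] at hσ hτ ⊢
        intro v hv
        simpa [mul_inv_rev] using hσ _ (hτ v hv) }
  { M with
    inv_mem' := fun {σ} hσ => (Submonoid.powers_le (P := M)).2 hσ
      (mem_powers_iff_mem_zpowers.2 (Subgroup.inv_mem _ (Subgroup.mem_zpowers σ))) }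

lemma prod_zpow_comp_eq_one {σ : Perm ι} (hσ : σ ∈ galoisLikeSubgroup r) {v : ι → ℤ}
    (hv : ∏ i, r i ^ v i = 1) : ∏ i, r i ^ v (σ i) = 1 := by
  simpa using mem_galoisLike_iff.1 (Subgroup.inv_mem _ hσ) v hv

end GaloisLike

section Averaging

variable {ι α : Type*}

lemma sum_apply_perm_mul_eq [AddCommMonoid α] (H : Subgroup (Perm ι)) [Fintype H]
    (v : ι → α) {τ : Perm ι} (hτ : τ ∈ H) (k : ι) :
    ∑ σ : H, v ((σ : Perm ι) (τ k)) = ∑ σ : H, v ((σ : Perm ι) k) :=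
  Fintype.sum_equiv (Equiv.mulRight ⟨τ, hτ⟩) _ _ fun _ => rfl

lemma exists_forall_ne_eq_of_invariant {H : Subgroup (Perm ι)} {i : ι}
    (htrans : ∀ k l, k ≠ i → l ≠ i → ∃ σ ∈ H, σ k = l) {u : ι → α}
    (hu : ∀ σ ∈ H, ∀ k, u (σ k) = u k) : ∃ C, ∀ k, k ≠ i → u k = C := by
  by_cases h : ∃ k₀, k₀ ≠ i
  · obtain ⟨k₀, hk₀⟩ := h
    refine ⟨u k₀, fun k hk => ?_⟩
    obtain ⟨σ, hσ, rfl⟩ := htrans k₀ k hk₀ hk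
    exact hu σ hσ k₀
  · push Not at h
    exact ⟨u i, fun k hk => absurd (h k) hk⟩

end Averaging

lemma SetDoublyTransitive.exists_fix_of_ne {ι : Type*} {S : Set (Perm ι)}
    (h : SetDoublyTransitive S) {i k l : ι} (hk : k ≠ i) (hl : l ≠ i) :
    ∃ σ ∈ S, σ i = i ∧ σ k = l := by
  obtain ⟨σ, hσ, hσk, hσi⟩ := h k i l i hk hl
  exact ⟨σ, hσ, hσi, hσk⟩

theorem card_mul_eq_sum_of_prod_zpow_eq_one {ι : Type*} [Fintype ι] {r : ι → ℂ}
    (hr : ∀ i, r i ≠ 0) (hprod : IsRat (∏ i, r i)) (h2t : SetDoublyTransitive (GaloisLike r))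
    {v : ι → ℤ} (hv : ∏ i, r i ^ v i = 1) {i : ι} (hi : ¬ IsRootOfRational (r i)) :
    (Fintype.card ι : ℤ) * v i = ∑ j, v j := by
  classical
  set H := galoisLikeSubgroup r ⊓ MulAction.stabilizer (Perm ι) i
  have hHi : ∀ σ : H, (σ : Perm ι) i = i := fun σ => (Subgroup.mem_inf.1 σ.2).2
  set u : ι → ℤ := fun k => ∑ σ : H, v ((σ : Perm ι) k)
  have hu : ∏ k, r k ^ u k = 1 :=
    prod_zpow_sum_eq_one hr _ fun σ _ => prod_zpow_comp_eq_one (Subgroup.mem_inf.1 σ.2).1 hv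
  obtain ⟨C, hC⟩ := exists_forall_ne_eq_of_invariant (H := H) (u := u)
    (fun k l hk hl => by
      obtain ⟨σ, hσ, hσi, hσk⟩ := h2t.exists_fix_of_ne hk hl
      exact ⟨σ, Subgroup.mem_inf.2 ⟨hσ, hσi⟩, hσk⟩)
    (fun τ hτ k => sum_apply_perm_mul_eq H v hτ k)
  have hui : u i = C := eq_of_prod_zpow_eq_one_of_forall_ne hr hprod hi hC hu
  have hconst : ∀ k, u k = u i := fun k => by
    by_cases hk : k = i
    · rw [hk]
    · rw [hC k hk, hui]
  have hui' : u i = Fintype.card H * v i := by simp [u, hHi]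
  have hsum : ∑ k, u k = Fintype.card H * ∑ j, v j := by
    simp only [u]
    rw [Finset.sum_comm]
    simp [Equiv.sum_comp]
  have hH : (Fintype.card H : ℤ) ≠ 0 := by exact_mod_cast Fintype.card_ne_zero
  refine mul_left_cancel₀ hH ?_
  calc (Fintype.card H : ℤ) * (Fintype.card ι * v i) = Fintype.card ι * u i := by
        rw [hui']
        ring
    _ = ∑ k, u k := by simp [hconst]
    _ = Fintype.card H * ∑ j, v j := hsum

section Vieta

variable {K L : Type*} [Field K] [Field L] [Algebra K L] {f : K[X]}
  {ι : Type*} [Fintype ι] {r : ι → L}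

lemma ne_zero_of_aeval_eq_zero (hf0 : f.eval 0 ≠ 0) {z : L} (hz : aeval z f = 0) : z ≠ 0 := by
  rintro rfl
  rw [← coeff_zero_eq_aeval_zero', coeff_zero_eq_eval_zero, map_eq_zero] at hz
  exact hf0 hz

lemma roots_map_eq_map_univ (hf : f ≠ 0) (hcard : Fintype.card ι = f.natDegree)
    (hinj : Function.Injective r) (hroot : ∀ i, aeval (r i) f = 0) :
    (f.map (algebraMap K L)).roots = Finset.univ.val.map r := by
  have hF : f.map (algebraMap K L) ≠ 0 := Polynomial.map_ne_zero hf
  refine (Multiset.eq_of_le_of_card_le ?_ ?_).symm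
  · rw [Multiset.le_iff_subset (Multiset.Nodup.map hinj Finset.univ.nodup)]
    intro z hz
    obtain ⟨i, _, rfl⟩ := Multiset.mem_map.1 hz
    rw [mem_roots hF, IsRoot, eval_map_algebraMap]
    exact hroot i
  · simpa [hcard] using card_roots' (f.map (algebraMap K L))

lemma exists_prod_eq_algebraMap [IsAlgClosed L] (hf : f ≠ 0)
    (hcard : Fintype.card ι = f.natDegree) (hinj : Function.Injective r)
    (hroot : ∀ i, aeval (r i) f = 0) :
    ∃ q : K, ∏ i, r i = algebraMap K L q := by
  have hvieta :=
    (IsAlgClosed.splits (f.map (algebraMap K L))).coeff_zero_eq_leadingCoeff_mul_prod_roots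
  rw [roots_map_eq_map_univ hf hcard hinj hroot, coeff_map, natDegree_map,
    leadingCoeff_map] at hvieta
  refine ⟨f.coeff 0 / ((-1) ^ f.natDegree * f.leadingCoeff), ?_⟩
  have hlc : algebraMap K L f.leadingCoeff ≠ 0 := by simpa using hf
  rw [map_div₀, hvieta, map_mul, map_pow, map_neg, map_one,
    mul_div_cancel_left₀ _ (mul_ne_zero (pow_ne_zero _ (neg_ne_zero.2 one_ne_zero)) hlc)]
  rfl

end Vieta

theorem statement10_general (f : Polynomial ℚ) (hf0 : f.eval 0 ≠ 0) (n : ℕ) (hn : n = f.natDegree)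
    (r : Fin n → ℂ) (hinj : Function.Injective r)
    (hroot : ∀ i, Polynomial.aeval (r i) f = 0)
    (s : ℕ)
    (horder : ∀ i : Fin n, (i : ℕ) < s ↔ ¬ IsRootOfRational (r i))
    (h2t : SetDoublyTransitive (GaloisLike r)) :
    ∀ v : Fin n → ℤ, (∏ i, r i ^ v i) = 1 →
      (∀ i j : Fin n, (i : ℕ) < s → (j : ℕ) < s → v i = v j) ∧
      (∀ i : Fin n, (i : ℕ) < s → (n : ℤ) * v i = ∑ j, v j) := by
  intro v hv
  have hf : f ≠ 0 := fun h => hf0 (by simp [h])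
  have hr : ∀ i, r i ≠ 0 := fun i => ne_zero_of_aeval_eq_zero hf0 (hroot i)
  have hprod : IsRat (∏ i, r i) := exists_prod_eq_algebraMap hf (by simp [hn]) hinj hroot
  have hmean : ∀ i : Fin n, (i : ℕ) < s → (n : ℤ) * v i = ∑ j, v j := fun i hi => by
    simpa using card_mul_eq_sum_of_prod_zpow_eq_one hr hprod h2t hv ((horder i).1 hi)
  refine ⟨fun i j hi hj => ?_, hmean⟩
  have hn0 : (n : ℤ) ≠ 0 := by exact_mod_cast i.pos.ne'
  exact mul_left_cancel₀ hn0 ((hmean i hi).trans (hmean j hj).symm)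

/-- Order the roots of `f` as `α₁,…,α_s,γ₁,…,γ_t` (`n = s + t`) where
`α₁,…,α_s` are exactly the roots that are not roots of rational. If `G_f` is doubly
transitive on the roots, then every `v ∈ R_f` satisfies
`v(1) = ⋯ = v(s) = (v(1)+⋯+v(n))/n`. -/
theorem statement10 (f : Polynomial ℚ) (hf0 : f.eval 0 ≠ 0) (n : ℕ) (hn : n = f.natDegree)
    (r : Fin n → ℂ) (hinj : Function.Injective r)
    (hroot : ∀ i, Polynomial.aeval (r i) f = 0)
    (hall : ∀ z : ℂ, Polynomial.aeval z f = 0 → ∃ i, r i = z)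
    (s t : ℕ) (hst : n = s + t)
    (horder : ∀ i : Fin n, (i : ℕ) < s ↔ ¬ IsRootOfRational (r i))
    (h2t : SetDoublyTransitive (GaloisLike r)) :
    ∀ v : Fin n → ℤ, (∏ i, r i ^ v i) = 1 →
      (∀ i j : Fin n, (i : ℕ) < s → (j : ℕ) < s → v i = v j) ∧
      (∀ i : Fin n, (i : ℕ) < s → (n : ℤ) * v i = ∑ j, v j) :=
  statement10_general f hf0 n hn r hinj hroot s horder h2t

end
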